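/- Let C be a class of distributions on a countable domain X, let α ≥ 1, and let V_sub be a subtractive adaptive adversary with fixed constant budget η. If there exist constants γ', ζ ∈ (0,1) such that for every m ∈ ℕ the adversary V_sub successfully (2αη + 2γ', ζ)-confuses C-generated samples of size m, then C is neither adaptively subtractively α-robustly learnable nor adaptively additively α-robustly learnable. -/

import Mathlib

open scoped ENNReal NNReal

/-- Total variation distance between two discrete distributions. -/
noncomputable def tv {X : Type*} (p q : PMF X) : ℝ :=
  (∑' x, |(p x).toReal - (q x).toReal|) / 2

/-- The distribution of an i.i.d. sample of size `m` from `p`, viewed as a multiset. -/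
noncomputable def iid {X : Type*} (p : PMF X) : ℕ → PMF (Multiset X)
  | 0 => PMF.pure 0
  | n + 1 => (iid p n).bind fun s => p.map fun x => x ::ₘ s

/-- `|Q|^m` : first draw `q ∼ Q`, then an i.i.d. sample `S ∼ q^m`. -/
noncomputable def metaSample {X : Type*} (Q : PMF (PMF X)) (m : ℕ) : PMF (Multiset X) :=
  Q.bind fun q => iid q m

/-- An adaptive adversary: a randomized map from samples (finite multisets) to samples. -/
abbrev Adversary (X : Type*) := Multiset X → PMF (Multiset X)

/-- `V(P)`: the distribution of `V S` for `S ∼ P` (including internal randomness). -/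
noncomputable def advPush {X : Type*} (V : Adversary X) (P : PMF (Multiset X)) :
    PMF (Multiset X) := P.bind V

/-- An additive adversary only adds points: `S ⊆ V(S)` almost surely. -/
def IsAdditive {X : Type*} (V : Adversary X) : Prop :=
  ∀ S T, T ∈ (V S).support → S ≤ T

/-- A subtractive adversary only removes points: `V(S) ⊆ S` almost surely. -/
def IsSubtractive {X : Type*} (V : Adversary X) : Prop :=
  ∀ S T, T ∈ (V S).support → T ≤ S

/-- Fixed constant budget `η`: `|V(S)|` depends only on `|S|` (via `c`), and for every `m`,
`η m − 1 < m·budget(V,m) ≤ η m` where `m·budget(V,m) = ||V(S)| − |S||`. -/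
def FixedBudget {X : Type*} (V : Adversary X) (η : ℝ) : Prop :=
  ∃ c : ℕ → ℕ, (∀ S T, T ∈ (V S).support → Multiset.card T = c (Multiset.card S)) ∧
    ∀ m : ℕ, η * m - 1 < |(c m : ℝ) - m| ∧ |(c m : ℝ) - m| ≤ η * m

/-- Fixed constant budget `η` for an additive adversary (`m·budget(V,m) = |V(S)| − |S|`). -/
def FixedBudgetAdd {X : Type*} (V : Adversary X) (η : ℝ) : Prop :=
  ∃ c : ℕ → ℕ, (∀ S T, T ∈ (V S).support → Multiset.card T = c (Multiset.card S)) ∧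
    ∀ m : ℕ, η * m - 1 < (c m : ℝ) - m ∧ (c m : ℝ) - m ≤ η * m

/-- Fixed constant budget `η` for a subtractive adversary (`m·budget(V,m) = |S| − |V(S)|`). -/
def FixedBudgetSub {X : Type*} (V : Adversary X) (η : ℝ) : Prop :=
  ∃ c : ℕ → ℕ, (∀ S T, T ∈ (V S).support → Multiset.card T = c (Multiset.card S)) ∧
    ∀ m : ℕ, η * m - 1 < (m : ℝ) - c m ∧ (m : ℝ) - c m ≤ η * m

/-- Probability of an event under a discrete distribution. -/
noncomputable def probEvent {β : Type*} (P : PMF β) (E : Set β) : ℝ≥0∞ :=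
  P.toOuterMeasure E

/-- `A` with sample complexity `mc` learns the class `C` against adversary `V`,
up to error `bound + ε` with confidence `1 − δ` once `m ≥ mc ε δ`. -/
def RobustLearnerFor {X : Type*} (C : Set (PMF X)) (A : Multiset X → PMF X)
    (mc : ℝ → ℝ → ℕ) (V : Adversary X) (bound : ℝ) : Prop :=
  ∀ p ∈ C, ∀ ε δ : ℝ, 0 < ε → ε < 1 → 0 < δ → δ < 1 →
    ∀ m : ℕ, mc ε δ ≤ m →
      1 - ENNReal.ofReal δ ≤
        probEvent ((iid p m).bind V) {T | tv (A T) p ≤ bound + ε}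

/-- `C` is adaptively α-robustly learnable w.r.t. the single adversary `V` with budget `η`. -/
def RobustlyLearnableWrt {X : Type*} (C : Set (PMF X)) (α : ℝ)
    (V : Adversary X) (η : ℝ) : Prop :=
  ∃ A mc, RobustLearnerFor C A mc V (α * η)

/-- `V` (with budget `η`) is a universal α-adversary for `C`. -/
def UniversalAdversary {X : Type*} (C : Set (PMF X)) (α : ℝ)
    (V : Adversary X) (η : ℝ) : Prop :=
  ¬ RobustlyLearnableWrt C α V η

/-- `C` is adaptively α-robustly learnable w.r.t. a class `𝒱` of adversaries
(each given with its budget). -/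
def RobustlyLearnableWrtClass {X : Type*} (C : Set (PMF X)) (α : ℝ)
    (𝒱 : Set (Adversary X × ℝ)) : Prop :=
  ∃ A mc, ∀ Vη ∈ 𝒱, RobustLearnerFor C A mc Vη.1 (α * Vη.2)

/-- `C` is adaptively additively α-robustly learnable: one learner works simultaneously
against all additive adaptive adversaries with fixed constant budgets. -/
def AdditivelyRobustlyLearnable {X : Type*} (C : Set (PMF X)) (α : ℝ) : Prop :=
  ∃ A mc, ∀ V : Adversary X, ∀ η : ℝ, 0 < η → η < 1 →
    IsAdditive V → FixedBudgetAdd V η → RobustLearnerFor C A mc V (α * η)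

/-- `C` is adaptively subtractively α-robustly learnable. -/
def SubtractivelyRobustlyLearnable {X : Type*} (C : Set (PMF X)) (α : ℝ) : Prop :=
  ∃ A mc, ∀ V : Adversary X, ∀ η : ℝ, 0 < η → η < 1 →
    IsSubtractive V → FixedBudgetSub V η → RobustLearnerFor C A mc V (α * η)

/-- The pair `(V1, V2)` successfully `(γ,ζ)`-confuses `C`-generated samples of size `m`. -/
def ConfusesPair {X : Type*} (C : Set (PMF X)) (V1 V2 : Adversary X)
    (γ ζ : ℝ) (m : ℕ) : Prop :=
  ∃ p ∈ C, ∃ Q : PMF (PMF X), Q.support ⊆ C ∧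
    (∀ q ∈ Q.support, γ < tv p q) ∧
    tv (advPush V1 (metaSample Q m)) (advPush V2 (iid p m)) < ζ

/-- A single adversary `V` successfully `(γ,ζ)`-confuses `C`-generated samples of size `m`. -/
def Confuses {X : Type*} (C : Set (PMF X)) (V : Adversary X) (γ ζ : ℝ) (m : ℕ) : Prop :=
  ConfusesPair C V V γ ζ m

/-- `p` is the distribution `p_{i,j,k} = (1 − 1/j)·δ_{(0,0)} + (1/j − 1/k)·U_{B_i×{2j+1}}
 + (1/k)·δ_{(i,2j+2)}` on `ℕ × ℕ`. -/
def IsPijk (B : ℕ → Finset ℕ) (i j k : ℕ) (p : PMF (ℕ × ℕ)) : Prop :=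
  ∀ x : ℕ × ℕ,
    p x = (1 - ((j : ℝ≥0∞))⁻¹) * (if x = (0, 0) then 1 else 0)
      + (((j : ℝ≥0∞))⁻¹ - ((k : ℝ≥0∞))⁻¹) *
          (if x.1 ∈ B i ∧ x.2 = 2 * j + 1 then (((B i).card : ℝ≥0∞))⁻¹ else 0)
      + ((k : ℝ≥0∞))⁻¹ * (if x = (i, 2 * j + 2) then 1 else 0)

/-- The class `C_g = {p_{i,j,g(j)} : i, j ∈ ℕ}` (for the meaningful parameters). -/
def Cg (B : ℕ → Finset ℕ) (g : ℕ → ℕ) : Set (PMF (ℕ × ℕ)) :=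
  {p | ∃ i j : ℕ, 1 ≤ j ∧ j < g j ∧ (B i).Nonempty ∧ IsPijk B i j (g j) p}

/-- `g` is superlinear: `g(n)/n → ∞`. -/
def Superlinear (g : ℕ → ℕ) : Prop :=
  Filter.Tendsto (fun n => (g n : ℝ) / n) Filter.atTop Filter.atTop

/-!
Subtractive case: a learner against `V_sub` must accept the corrupted `p`-samples with
probability at least `1 - δ` and, since `p` is more than twice the error bound away from every
`q` in the support of `Q`, the corrupted `Q`-samples with probability at most `δ`. This gap of
`1 - 2δ` is bounded by the total variation of the two corrupted sample laws, which is below `ζ`.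

Additive case: an additive adversary cannot remove points, but it can add them back. Write
`S = T + D` with `T ∼ V_sub(S)` retained and `D` removed. The additive adversary flips a fair
coin and appends to `S` a fresh removal `D'` drawn from the conditional law of `D` given `T`,
under the `p`-source or under the `Q`-source. When the coin names the other source, the output
`T + D + D'` has the same law given `T` under both sources, so the learner's acceptance
probabilities now differ by at most `(1 + ζ) / 2`, which is again below `1 - 2δ` for small `δ`.
-/

section ProbEvent

variable {S T : Type*}

lemma PMF.summable_toReal (μ : PMF T) : Summable fun t => (μ t).toReal :=
  ENNReal.summable_toReal (μ.tsum_coe ▸ ENNReal.one_ne_top)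

lemma PMF.tsum_toReal (μ : PMF T) : ∑' t, (μ t).toReal = 1 := by
  rw [← ENNReal.tsum_toReal_eq μ.apply_ne_top, μ.tsum_coe, ENNReal.toReal_one]

lemma PMF.bind_congr_support (μ : PMF T) {f g : T → PMF S} (h : ∀ t ∈ μ.support, f t = g t) :
    μ.bind f = μ.bind g := by
  ext s
  refine tsum_congr fun t => ?_
  by_cases ht : t ∈ μ.support
  · rw [h t ht]
  · rw [(μ.apply_eq_zero_iff t).2 ht, zero_mul, zero_mul]

lemma tv_comm (μ ν : PMF T) : tv μ ν = tv ν μ := by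
  simp only [tv, abs_sub_comm]

lemma summable_abs_sub_toReal (μ ν : PMF T) :
    Summable fun t => |(μ t).toReal - (ν t).toReal| :=
  (μ.summable_toReal.sub ν.summable_toReal).abs

lemma tv_triangle (μ ν ρ : PMF T) : tv μ ν ≤ tv μ ρ + tv ρ ν := by
  rw [tv, tv, tv, ← add_div,
    ← (summable_abs_sub_toReal μ ρ).tsum_add (summable_abs_sub_toReal ρ ν)]
  refine div_le_div_of_nonneg_right ?_ zero_le_two
  exact (summable_abs_sub_toReal μ ν).tsum_le_tsum (fun t => abs_sub_le _ _ _)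
    ((summable_abs_sub_toReal μ ρ).add (summable_abs_sub_toReal ρ ν))

/-- Since both masses sum to one, the difference is `∑ (μ - ν) (g - 1/2)`,
and `|g - 1/2| ≤ 1/2`. -/
lemma tsum_mul_sub_tsum_mul_le_tv (μ ν : PMF T) {g : T → ℝ} (hg₀ : ∀ t, 0 ≤ g t)
    (hg₁ : ∀ t, g t ≤ 1) :
    ∑' t, (μ t).toReal * g t - ∑' t, (ν t).toReal * g t ≤ tv μ ν := by
  have hmul : ∀ ρ : PMF T, Summable fun t => (ρ t).toReal * g t := fun ρ =>
    ρ.summable_toReal.of_nonneg_of_le (fun t => mul_nonneg ENNReal.toReal_nonneg (hg₀ t))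
      fun t => mul_le_of_le_one_right ENNReal.toReal_nonneg (hg₁ t)
  have hsub := μ.summable_toReal.sub ν.summable_toReal
  have hbound : ∀ t, ((μ t).toReal - (ν t).toReal) * (g t - 1 / 2)
      ≤ |(μ t).toReal - (ν t).toReal| / 2 := fun t => by
    have : |g t - 1 / 2| ≤ 1 / 2 := abs_le.2 ⟨by linarith [hg₀ t], by linarith [hg₁ t]⟩
    calc _ ≤ |((μ t).toReal - (ν t).toReal) * (g t - 1 / 2)| := le_abs_self _
      _ ≤ |(μ t).toReal - (ν t).toReal| * (1 / 2) := by
        rw [abs_mul]; exact mul_le_mul_of_nonneg_left this (abs_nonneg _)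
      _ = _ := by ring
  have hshift : Summable fun t => ((μ t).toReal - (ν t).toReal) * (g t - 1 / 2) := by
    refine (((hmul μ).sub (hmul ν)).sub (hsub.div_const 2)).congr fun t => ?_
    ring
  calc ∑' t, (μ t).toReal * g t - ∑' t, (ν t).toReal * g t
      = ∑' t, ((μ t).toReal - (ν t).toReal) * (g t - 1 / 2)
          + ∑' t, ((μ t).toReal - (ν t).toReal) / 2 := by
        rw [← (hmul μ).tsum_sub (hmul ν), ← hshift.tsum_add (hsub.div_const 2)]
        exact tsum_congr fun t => by ring
    _ = ∑' t, ((μ t).toReal - (ν t).toReal) * (g t - 1 / 2) := by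
        rw [tsum_div_const, μ.summable_toReal.tsum_sub ν.summable_toReal, μ.tsum_toReal,
          ν.tsum_toReal, sub_self, zero_div, add_zero]
    _ ≤ ∑' t, |(μ t).toReal - (ν t).toReal| / 2 :=
        hshift.tsum_le_tsum hbound ((summable_abs_sub_toReal μ ν).div_const 2)
    _ = tv μ ν := tsum_div_const

noncomputable def probEventReal (μ : PMF T) (E : Set T) : ℝ := (probEvent μ E).toReal

lemma probEvent_le_one (μ : PMF T) (E : Set T) : probEvent μ E ≤ 1 :=
  (μ.toOuterMeasure.mono (Set.subset_univ E)).trans_eq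
    ((μ.toOuterMeasure_apply_eq_one_iff _).2 (Set.subset_univ _))

lemma probEvent_ne_top (μ : PMF T) (E : Set T) : probEvent μ E ≠ ∞ :=
  ne_top_of_le_ne_top ENNReal.one_ne_top (probEvent_le_one μ E)

lemma probEvent_add_probEvent_compl (μ : PMF T) (E : Set T) :
    probEvent μ E + probEvent μ Eᶜ = 1 := by
  rw [probEvent, probEvent, PMF.toOuterMeasure_apply, PMF.toOuterMeasure_apply,
    ← ENNReal.tsum_add, ← μ.tsum_coe]
  exact tsum_congr fun t => congrFun (Set.indicator_self_add_compl E μ) t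

lemma probEventReal_nonneg (μ : PMF T) (E : Set T) : 0 ≤ probEventReal μ E :=
  ENNReal.toReal_nonneg

lemma probEventReal_le_one (μ : PMF T) (E : Set T) : probEventReal μ E ≤ 1 :=
  ENNReal.toReal_le_of_le_ofReal zero_le_one
    (ENNReal.ofReal_one ▸ probEvent_le_one μ E)

lemma probEventReal_mono (μ : PMF T) {E F : Set T} (h : E ⊆ F) :
    probEventReal μ E ≤ probEventReal μ F :=
  ENNReal.toReal_mono (probEvent_ne_top μ F) (μ.toOuterMeasure.mono h)

lemma probEventReal_compl (μ : PMF T) (E : Set T) :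
    probEventReal μ Eᶜ = 1 - probEventReal μ E := by
  have h := congrArg ENNReal.toReal (probEvent_add_probEvent_compl μ E)
  rw [ENNReal.toReal_add (probEvent_ne_top μ E) (probEvent_ne_top μ Eᶜ),
    ENNReal.toReal_one] at h
  rw [probEventReal, probEventReal]
  linarith

lemma one_sub_le_probEventReal {μ : PMF T} {E : Set T} {δ : ℝ} (hδ : 0 ≤ δ)
    (h : 1 - ENNReal.ofReal δ ≤ probEvent μ E) : 1 - δ ≤ probEventReal μ E := by
  rcases le_or_gt 1 δ with hδ₁ | hδ₁
  · linarith [probEventReal_nonneg μ E]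
  calc 1 - δ = (1 - ENNReal.ofReal δ).toReal := by
        rw [ENNReal.toReal_sub_of_le (ENNReal.ofReal_le_one.2 hδ₁.le) ENNReal.one_ne_top,
          ENNReal.toReal_one, ENNReal.toReal_ofReal hδ]
    _ ≤ probEventReal μ E := ENNReal.toReal_mono (probEvent_ne_top μ E) h

lemma probEventReal_bind (P : PMF S) (f : S → PMF T) (E : Set T) :
    probEventReal (P.bind f) E = ∑' s, (P s).toReal * probEventReal (f s) E := by
  rw [probEventReal, probEvent, PMF.toOuterMeasure_bind_apply,
    ENNReal.tsum_toReal_eq (f := fun s => P s * (f s).toOuterMeasure E)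
      fun s => ENNReal.mul_ne_top (P.apply_ne_top s) (probEvent_ne_top (f s) E)]
  simp only [ENNReal.toReal_mul, probEventReal, probEvent]

lemma probEventReal_bind_sub_le_tv (P₁ P₂ : PMF S) (f : S → PMF T) (E : Set T) :
    probEventReal (P₁.bind f) E - probEventReal (P₂.bind f) E ≤ tv P₁ P₂ := by
  rw [probEventReal_bind, probEventReal_bind]
  exact tsum_mul_sub_tsum_mul_le_tv P₁ P₂ (fun s => probEventReal_nonneg _ E)
    fun s => probEventReal_le_one _ E

lemma probEventReal_sub_le_tv (μ ν : PMF T) (E : Set T) :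
    probEventReal μ E - probEventReal ν E ≤ tv μ ν := by
  simpa only [PMF.bind_pure] using probEventReal_bind_sub_le_tv μ ν PMF.pure E

end ProbEvent

section Disintegration

variable {A B : Type*}

open Classical in
lemma PMF.map_prodMk_apply (κ : PMF B) (a a' : A) (b : B) :
    (κ.map (Prod.mk a')) (a, b) = if a' = a then κ b else 0 := by
  split_ifs with h
  · subst h; simp [PMF.map_apply]
  · simp [PMF.map_apply, Ne.symm h]

lemma PMF.map_fst_apply (J : PMF (A × B)) (a : A) : J.map Prod.fst a = ∑' b, J (a, b) := by
  classical
  rw [PMF.map_apply, ENNReal.tsum_prod', ENNReal.tsum_comm]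
  simp

/-- Where the first marginal vanishes, `κ a` is a point mass in `s`. -/
lemma PMF.exists_disintegration (J : PMF (A × B)) {s : Set B} (hs : s.Nonempty)
    (hJ : ∀ x ∈ J.support, x.2 ∈ s) :
    ∃ κ : A → PMF B, (∀ a, (κ a).support ⊆ s) ∧
      J = (J.map Prod.fst).bind fun a => (κ a).map (Prod.mk a) := by
  obtain ⟨b₀, hb₀⟩ := hs
  set M := J.map Prod.fst
  have hM : ∀ a, M a = ∑' b, J (a, b) := J.map_fst_apply
  let κ : A → PMF B := fun a => if h : M a = 0 then PMF.pure b₀ else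
    PMF.normalize (fun b => J (a, b)) (hM a ▸ h) (hM a ▸ M.apply_ne_top a)
  refine ⟨κ, fun a b hb => ?_, ?_⟩
  · by_cases h : M a = 0
    · simp only [κ, h, dite_true, PMF.support_pure, Set.mem_singleton_iff] at hb
      exact hb ▸ hb₀
    · simp only [κ, h, dite_false, PMF.mem_support_normalize_iff] at hb
      exact hJ (a, b) ((PMF.mem_support_iff _ _).2 hb)
  · ext ⟨a, b⟩
    rw [PMF.bind_apply, tsum_eq_single a fun a' ha' => by rw [PMF.map_prodMk_apply, if_neg ha',
      mul_zero], PMF.map_prodMk_apply, if_pos rfl]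
    by_cases h : M a = 0
    · rw [h, zero_mul]
      exact ENNReal.tsum_eq_zero.1 (hM a ▸ h) b
    · simp only [κ, h, dite_false, PMF.normalize_apply, ← hM]
      rw [mul_comm, mul_assoc, ENNReal.inv_mul_cancel h (M.apply_ne_top a), mul_one]

end Disintegration

section Samples

variable {X : Type*}

lemma iid_support_card (p : PMF X) (m : ℕ) : ∀ S ∈ (iid p m).support, Multiset.card S = m := by
  induction m with
  | zero => simp [iid]
  | succ n ih =>
    intro S hS
    simp only [iid, PMF.mem_support_bind_iff, PMF.mem_support_map_iff] at hS
    obtain ⟨s, hs, x, -, rfl⟩ := hS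
    rw [Multiset.card_cons, ih s hs]

lemma metaSample_support_card (Q : PMF (PMF X)) (m : ℕ) :
    ∀ S ∈ (metaSample Q m).support, Multiset.card S = m := by
  simp only [metaSample, PMF.mem_support_bind_iff]
  rintro S ⟨q, -, hS⟩
  exact iid_support_card q m S hS

/-- The acceptance regions of `p` and of every `q` far from `p` are disjoint. -/
lemma RobustLearnerFor.one_sub_two_mul_le_sub {C : Set (PMF X)} {A : Multiset X → PMF X}
    {mc : ℝ → ℝ → ℕ} {V : Adversary X} {bd : ℝ} (hA : RobustLearnerFor C A mc V bd)
    {ε δ : ℝ} (hε₀ : 0 < ε) (hε₁ : ε < 1) (hδ₀ : 0 < δ) (hδ₁ : δ < 1) {p : PMF X} (hp : p ∈ C)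
    {Q : PMF (PMF X)} (hQ : Q.support ⊆ C) (hsep : ∀ q ∈ Q.support, 2 * bd + 2 * ε < tv p q)
    {m : ℕ} (hm : mc ε δ ≤ m) :
    1 - 2 * δ ≤ probEventReal ((iid p m).bind V) {T | tv (A T) p ≤ bd + ε}
      - probEventReal ((metaSample Q m).bind V) {T | tv (A T) p ≤ bd + ε} := by
  set E := {T | tv (A T) p ≤ bd + ε}
  have hp_acc := one_sub_le_probEventReal hδ₀.le (hA p hp ε δ hε₀ hε₁ hδ₀ hδ₁ m hm)
  have hq_acc : ∀ q ∈ Q.support, probEvent ((iid q m).bind V) E ≤ ENNReal.ofReal δ := by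
    intro q hq
    have hdisj : E ⊆ {T | tv (A T) q ≤ bd + ε}ᶜ := by
      intro T (hT : tv (A T) p ≤ bd + ε) (hTq : tv (A T) q ≤ bd + ε)
      linarith [hsep q hq, tv_triangle p q (A T), tv_comm p (A T)]
    rw [ENNReal.le_ofReal_iff_toReal_le (probEvent_ne_top _ E) hδ₀.le]
    change probEventReal _ E ≤ δ
    linarith [probEventReal_mono ((iid q m).bind V) hdisj, probEventReal_compl ((iid q m).bind V)
      {T | tv (A T) q ≤ bd + ε}, one_sub_le_probEventReal hδ₀.le
      (hA q (hQ hq) ε δ hε₀ hε₁ hδ₀ hδ₁ m hm)]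
  have hQ_acc : probEvent ((metaSample Q m).bind V) E ≤ ENNReal.ofReal δ := by
    rw [metaSample, PMF.bind_bind, probEvent, PMF.toOuterMeasure_bind_apply]
    calc ∑' q, Q q * probEvent ((iid q m).bind V) E ≤ ∑' q, Q q * ENNReal.ofReal δ := by
          refine ENNReal.tsum_le_tsum fun q => ?_
          by_cases hq : q ∈ Q.support
          · gcongr; exact hq_acc q hq
          · rw [(Q.apply_eq_zero_iff q).2 hq, zero_mul, zero_mul]
      _ = ENNReal.ofReal δ := by rw [ENNReal.tsum_mul_right, Q.tsum_coe, one_mul]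
  have : probEventReal ((metaSample Q m).bind V) E ≤ δ :=
    ENNReal.toReal_le_of_le_ofReal hδ₀.le hQ_acc
  linarith

end Samples

section Resampling

variable {X : Type*}

noncomputable def coinMix (V₁ V₂ : Adversary X) : Adversary X :=
  fun S => (PMF.uniformOfFintype Bool).bind fun b => cond b (V₁ S) (V₂ S)

lemma mem_support_coinMix {V₁ V₂ : Adversary X} {S T : Multiset X} :
    T ∈ (coinMix V₁ V₂ S).support ↔ T ∈ (V₁ S).support ∨ T ∈ (V₂ S).support := by
  simp [coinMix, or_comm]

lemma probEventReal_bind_coinMix (P : PMF (Multiset X)) (V₁ V₂ : Adversary X)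
    (E : Set (Multiset X)) :
    probEventReal (P.bind (coinMix V₁ V₂)) E
      = (probEventReal (P.bind V₁) E + probEventReal (P.bind V₂) E) / 2 := by
  unfold coinMix
  rw [PMF.bind_comm, probEventReal_bind, tsum_bool]
  simp [PMF.uniformOfFintype_apply]
  ring

noncomputable def addRemovalSample (Vs : Adversary X) (κ : Multiset X → PMF (Multiset X)) :
    Adversary X :=
  fun S => (Vs S).bind fun T => (κ T).map (S + ·)

lemma exists_of_mem_support_addRemovalSample {Vs : Adversary X}
    {κ : Multiset X → PMF (Multiset X)} {S S' : Multiset X}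
    (h : S' ∈ (addRemovalSample Vs κ S).support) : ∃ T, ∃ D ∈ (κ T).support, S' = S + D := by
  simp only [addRemovalSample, PMF.mem_support_bind_iff, PMF.mem_support_map_iff] at h
  obtain ⟨T, -, D, hD, rfl⟩ := h
  exact ⟨T, D, hD, rfl⟩

noncomputable def doubleRemoval (κ κ' : Multiset X → PMF (Multiset X)) (T : Multiset X) :
    PMF (Multiset X) :=
  (κ T).bind fun D => (κ' T).map (T + D + ·)

lemma doubleRemoval_comm (κ κ' : Multiset X → PMF (Multiset X)) :
    doubleRemoval κ κ' = doubleRemoval κ' κ := by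
  funext T
  simp only [doubleRemoval, ← PMF.bind_pure_comp]
  rw [PMF.bind_comm]
  simp only [Function.comp_def, add_right_comm]

end Resampling

section AdditiveFromSubtractive

variable {X : Type*} [DecidableEq X]

noncomputable def removalJoint (Vs : Adversary X) (P : PMF (Multiset X)) :
    PMF (Multiset X × Multiset X) :=
  P.bind fun S => (Vs S).map fun T => (T, S - T)

lemma removalJoint_map_fst (Vs : Adversary X) (P : PMF (Multiset X)) :
    (removalJoint Vs P).map Prod.fst = P.bind Vs := by
  simp only [removalJoint, PMF.map_bind, PMF.map_comp]
  exact congrArg P.bind (funext fun S => (Vs S).map_id)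

lemma card_snd_of_mem_support_removalJoint {Vs : Adversary X} (hVs : IsSubtractive Vs)
    {c : ℕ → ℕ} (hc : ∀ S T, T ∈ (Vs S).support → Multiset.card T = c (Multiset.card S))
    {P : PMF (Multiset X)} {m : ℕ} (hP : ∀ S ∈ P.support, Multiset.card S = m) :
    ∀ x ∈ (removalJoint Vs P).support, Multiset.card x.2 = m - c m := by
  simp only [removalJoint, PMF.mem_support_bind_iff, PMF.mem_support_map_iff]
  rintro _ ⟨S, hS, T, hT, rfl⟩
  rw [Multiset.card_sub (hVs S T hT), hc S T hT, hP S hS]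

/-- Since `S = T + (S - T)`, re-adding a resampled removal to `S` is the same as adding two
removals to the retained part `T`: the true one, distributed according to `κ`, and the
resampled one. -/
lemma bind_addRemovalSample {Vs : Adversary X} (hVs : IsSubtractive Vs) {P : PMF (Multiset X)}
    {κ : Multiset X → PMF (Multiset X)}
    (hκ : removalJoint Vs P = (P.bind Vs).bind fun T => (κ T).map (Prod.mk T))
    (κ' : Multiset X → PMF (Multiset X)) :
    P.bind (addRemovalSample Vs κ') = (P.bind Vs).bind (doubleRemoval κ κ') := by
  have hsplit : addRemovalSample Vs κ'
      = fun S => (Vs S).bind fun T => (κ' T).map (T + (S - T) + ·) := funext fun S =>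
    (Vs S).bind_congr_support fun T hT => by rw [add_tsub_cancel_of_le (hVs S T hT)]
  calc P.bind (addRemovalSample Vs κ')
      = (removalJoint Vs P).bind fun x => (κ' x.1).map (x.1 + x.2 + ·) := by
        rw [hsplit]
        simp only [removalJoint, PMF.bind_bind, PMF.bind_map]
        rfl
    _ = _ := by
        rw [hκ]
        simp only [PMF.bind_bind, PMF.bind_map]
        rfl

end AdditiveFromSubtractive

section Companion

variable {X : Type*}

lemma IsSubtractive.le_of_card_eq [Nonempty X] {Vs : Adversary X} (hVs : IsSubtractive Vs)
    {c : ℕ → ℕ} (hc : ∀ S T, T ∈ (Vs S).support → Multiset.card T = c (Multiset.card S))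
    (n : ℕ) : c n ≤ n := by
  obtain ⟨x⟩ := ‹Nonempty X›
  obtain ⟨T, hT⟩ := (Vs (Multiset.replicate n x)).support_nonempty
  have := Multiset.card_le_card (hVs _ T hT)
  rwa [hc _ T hT, Multiset.card_replicate] at this

lemma fixedBudgetAdd_of_card_eq {Va : Adversary X} {η : ℝ} {c : ℕ → ℕ} (hcle : ∀ n, c n ≤ n)
    (hcb : ∀ n : ℕ, η * n - 1 < (n : ℝ) - c n ∧ (n : ℝ) - c n ≤ η * n)
    (hVa : ∀ S T, T ∈ (Va S).support →
      Multiset.card T = Multiset.card S + (Multiset.card S - c (Multiset.card S))) :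
    FixedBudgetAdd Va η :=
  ⟨fun n => n + (n - c n), hVa, fun n => by
    rw [Nat.cast_add, Nat.cast_sub (hcle n), add_sub_cancel_left]
    exact hcb n⟩

/-- Samples of size other than `m` are padded with copies of `x₀` only to respect the fixed
budget. -/
noncomputable def additiveCompanion (Vs : Adversary X) (κ₁ κ₂ : Multiset X → PMF (Multiset X))
    (m : ℕ) (c : ℕ → ℕ) (x₀ : X) : Adversary X := fun S =>
  if Multiset.card S = m then coinMix (addRemovalSample Vs κ₁) (addRemovalSample Vs κ₂) S
  else PMF.pure (S + Multiset.replicate (Multiset.card S - c (Multiset.card S)) x₀)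

variable {Vs : Adversary X} {κ₁ κ₂ : Multiset X → PMF (Multiset X)} {m : ℕ} {c : ℕ → ℕ} {x₀ : X}

lemma exists_of_mem_support_additiveCompanion
    (hκ₁ : ∀ T, (κ₁ T).support ⊆ {D | Multiset.card D = m - c m})
    (hκ₂ : ∀ T, (κ₂ T).support ⊆ {D | Multiset.card D = m - c m}) {S S' : Multiset X}
    (h : S' ∈ (additiveCompanion Vs κ₁ κ₂ m c x₀ S).support) :
    ∃ D, S' = S + D ∧ Multiset.card D = Multiset.card S - c (Multiset.card S) := by
  unfold additiveCompanion at h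
  split_ifs at h with hS
  · rcases mem_support_coinMix.1 h with h | h <;>
      obtain ⟨T, D, hD, rfl⟩ := exists_of_mem_support_addRemovalSample h
    · exact ⟨D, rfl, hS ▸ hκ₁ T hD⟩
    · exact ⟨D, rfl, hS ▸ hκ₂ T hD⟩
  · exact ⟨_, (PMF.mem_support_pure_iff _ _).1 h, Multiset.card_replicate _ _⟩

lemma bind_additiveCompanion {P : PMF (Multiset X)}
    (hP : ∀ S ∈ P.support, Multiset.card S = m) :
    P.bind (additiveCompanion Vs κ₁ κ₂ m c x₀)
      = P.bind (coinMix (addRemovalSample Vs κ₁) (addRemovalSample Vs κ₂)) :=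
  P.bind_congr_support fun S hS => if_pos (hP S hS)

end Companion

theorem IsSubtractive.exists_isAdditive_sub_le {X : Type*} [Nonempty X] {Vs : Adversary X}
    (hVs : IsSubtractive Vs) {η : ℝ} (hb : FixedBudgetSub Vs η) {m : ℕ}
    {P₁ P₂ : PMF (Multiset X)} (h₁ : ∀ S ∈ P₁.support, Multiset.card S = m)
    (h₂ : ∀ S ∈ P₂.support, Multiset.card S = m) :
    ∃ Va : Adversary X, IsAdditive Va ∧ FixedBudgetAdd Va η ∧ ∀ E,
      probEventReal (P₁.bind Va) E - probEventReal (P₂.bind Va) E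
        ≤ (1 + tv (P₁.bind Vs) (P₂.bind Vs)) / 2 := by
  classical
  obtain ⟨c, hc, hcb⟩ := hb
  obtain ⟨x₀⟩ := ‹Nonempty X›
  have hs : {D : Multiset X | Multiset.card D = m - c m}.Nonempty :=
    ⟨Multiset.replicate (m - c m) x₀, Multiset.card_replicate _ _⟩
  obtain ⟨κ₁, hκ₁, hJ₁⟩ := (removalJoint Vs P₁).exists_disintegration hs
    (card_snd_of_mem_support_removalJoint hVs hc h₁)
  obtain ⟨κ₂, hκ₂, hJ₂⟩ := (removalJoint Vs P₂).exists_disintegration hs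
    (card_snd_of_mem_support_removalJoint hVs hc h₂)
  rw [removalJoint_map_fst] at hJ₁ hJ₂
  refine ⟨additiveCompanion Vs κ₁ κ₂ m c x₀, fun S S' h => ?_,
    fixedBudgetAdd_of_card_eq (hVs.le_of_card_eq hc) hcb fun S S' h => ?_, fun E => ?_⟩
  · obtain ⟨D, rfl, -⟩ := exists_of_mem_support_additiveCompanion hκ₁ hκ₂ h
    exact le_self_add
  · obtain ⟨D, rfl, hD⟩ := exists_of_mem_support_additiveCompanion hκ₁ hκ₂ h
    rw [Multiset.card_add, hD]
  · have hcross : probEventReal (P₁.bind (addRemovalSample Vs κ₂)) E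
        - probEventReal (P₂.bind (addRemovalSample Vs κ₁)) E ≤ tv (P₁.bind Vs) (P₂.bind Vs) := by
      rw [bind_addRemovalSample hVs hJ₁, bind_addRemovalSample hVs hJ₂, doubleRemoval_comm κ₂]
      exact probEventReal_bind_sub_le_tv _ _ _ E
    rw [bind_additiveCompanion h₁, bind_additiveCompanion h₂, probEventReal_bind_coinMix,
      probEventReal_bind_coinMix]
    linarith [probEventReal_le_one (P₁.bind (addRemovalSample Vs κ₁)) E,
      probEventReal_nonneg (P₂.bind (addRemovalSample Vs κ₂)) E]

theorem stmt8_general {X : Type*} (C : Set (PMF X)) (α : ℝ)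
    (Vs : Adversary X) (hVs : IsSubtractive Vs) (η : ℝ) (hη : η ∈ Set.Ioo (0 : ℝ) 1)
    (hb : FixedBudgetSub Vs η)
    (γ' ζ : ℝ) (hγ' : γ' ∈ Set.Ioo (0 : ℝ) 1) (hζ : ζ ∈ Set.Ioo (0 : ℝ) 1)
    (hconf : ∀ m : ℕ, Confuses C Vs (2 * α * η + 2 * γ') ζ m) :
    ¬ SubtractivelyRobustlyLearnable C α ∧ ¬ AdditivelyRobustlyLearnable C α := by
  obtain ⟨hη₀, hη₁⟩ := hη
  obtain ⟨hγ₀, hγ₁⟩ := hγ'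
  obtain ⟨hζ₀, hζ₁⟩ := hζ
  -- for this `δ`, `1 - 2δ` exceeds both `ζ` and `(1 + ζ) / 2`
  set δ := (1 - ζ) / 8 with hδ
  have hδ₀ : 0 < δ := by linarith
  have hδ₁ : δ < 1 := by linarith
  have hsep {p : PMF X} {Q : PMF (PMF X)} (h : ∀ q ∈ Q.support, 2 * α * η + 2 * γ' < tv p q) :
      ∀ q ∈ Q.support, 2 * (α * η) + 2 * γ' < tv p q := by simpa only [mul_assoc] using h
  constructor
  · rintro ⟨A, mc, hA⟩
    obtain ⟨p, hp, Q, hQ, hfar, hclose⟩ := hconf (mc γ' δ)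
    have hgap := (hA Vs η hη₀ hη₁ hVs hb).one_sub_two_mul_le_sub hγ₀ hγ₁ hδ₀ hδ₁ hp hQ
      (hsep hfar) le_rfl
    have hcl : tv ((iid p _).bind Vs) ((metaSample Q _).bind Vs) < ζ := tv_comm _ _ ▸ hclose
    linarith [probEventReal_sub_le_tv ((iid p (mc γ' δ)).bind Vs)
      ((metaSample Q (mc γ' δ)).bind Vs) {T | tv (A T) p ≤ α * η + γ'}]
  · rintro ⟨A, mc, hA⟩
    obtain ⟨p, hp, Q, hQ, hfar, hclose⟩ := hconf (mc γ' δ)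
    have : Nonempty X := ⟨p.support_nonempty.some⟩
    obtain ⟨Va, hVa, hbVa, hVa_close⟩ := hVs.exists_isAdditive_sub_le hb
      (iid_support_card p (mc γ' δ)) (metaSample_support_card Q (mc γ' δ))
    have hgap := (hA Va η hη₀ hη₁ hVa hbVa).one_sub_two_mul_le_sub hγ₀ hγ₁ hδ₀ hδ₁ hp hQ
      (hsep hfar) le_rfl
    have hcl : tv ((iid p _).bind Vs) ((metaSample Q _).bind Vs) < ζ := tv_comm _ _ ▸ hclose
    linarith [hVa_close {T | tv (A T) p ≤ α * η + γ'}]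

/-- If a subtractive adaptive adversary `V_sub` with fixed constant budget
`η` successfully `(2αη + 2γ', ζ)`-confuses `C`-generated samples of every size `m`, then `C`
is neither adaptively subtractively nor adaptively additively α-robustly learnable. -/
theorem stmt8 {X : Type*} [Countable X] (C : Set (PMF X)) (α : ℝ) (hα : 1 ≤ α)
    (Vs : Adversary X) (hVs : IsSubtractive Vs) (η : ℝ) (hη : η ∈ Set.Ioo (0 : ℝ) 1)
    (hb : FixedBudgetSub Vs η)
    (γ' ζ : ℝ) (hγ' : γ' ∈ Set.Ioo (0 : ℝ) 1) (hζ : ζ ∈ Set.Ioo (0 : ℝ) 1)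
    (hconf : ∀ m : ℕ, Confuses C Vs (2 * α * η + 2 * γ') ζ m) :
    ¬ SubtractivelyRobustlyLearnable C α ∧ ¬ AdditivelyRobustlyLearnable C α :=
  stmt8_general C α Vs hVs η hη hb γ' ζ hγ' hζ hconf
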